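/- arXiv:2308.15520 — 7 statements merged into one kernel-verified Lean document; each statement's English description precedes it below -/
import Mathlib

section
/- Let H1 be an r1×n1 matrix and H2 an r2×n2 matrix over GF(2). Define H_X = (H1 ⊗ I_{n2} , I_{r1} ⊗ H2ᵀ) and H_Z = (I_{n1} ⊗ H2 , H1ᵀ ⊗ I_{r2}) as block matrices acting on GF(2)^{n1·n2} ⊕ GF(2)^{r1·r2}. Then H_X · H_Zᵀ = 0. -/
open Matrix Kronecker

theorem fromCols_kronecker_mul_transpose_fromCols_kronecker {R m n p q : Type*} [CommRing R]
    [Fintype m] [Fintype n] [Fintype p] [Fintype q]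
    [DecidableEq m] [DecidableEq n] [DecidableEq p] [DecidableEq q]
    (A : Matrix m n R) (B : Matrix p q R) :
    fromCols (A ⊗ₖ (1 : Matrix q q R)) ((1 : Matrix m m R) ⊗ₖ Bᵀ) *
        (fromCols ((1 : Matrix n n R) ⊗ₖ B) (Aᵀ ⊗ₖ (1 : Matrix p p R)))ᵀ =
      A ⊗ₖ Bᵀ + A ⊗ₖ Bᵀ := by
  rw [transpose_fromCols, fromCols_mul_fromRows, ← kroneckerMap_transpose,
    ← kroneckerMap_transpose, transpose_one, transpose_one, transpose_transpose,
    ← mul_kronecker_mul, ← mul_kronecker_mul, Matrix.one_mul, Matrix.mul_one,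
    Matrix.one_mul, Matrix.mul_one]

/-- CSS commutation condition for hypergraph product codes: `H_X * H_Zᵀ = 0`. -/
theorem hgp_css_commute (r1 n1 r2 n2 : ℕ)
    (H1 : Matrix (Fin r1) (Fin n1) (ZMod 2))
    (H2 : Matrix (Fin r2) (Fin n2) (ZMod 2)) :
    (Matrix.fromCols (H1 ⊗ₖ (1 : Matrix (Fin n2) (Fin n2) (ZMod 2)))
        ((1 : Matrix (Fin r1) (Fin r1) (ZMod 2)) ⊗ₖ H2ᵀ)) *
      (Matrix.fromCols ((1 : Matrix (Fin n1) (Fin n1) (ZMod 2)) ⊗ₖ H2)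
        (H1ᵀ ⊗ₖ (1 : Matrix (Fin r2) (Fin r2) (ZMod 2))))ᵀ = 0 := by
  rw [fromCols_kronecker_mul_transpose_fromCols_kronecker]
  ext i j
  exact CharTwo.add_self_eq_zero _
end

section
/- Let H1, H2 be matrices over GF(2) of sizes r1×n1 and r2×n2. Let x1,...,x_{k1} be a basis of ker H1 and y1,...,y_{k2} standard basis vectors of GF(2)^{n2} such that no nonzero combination of the y_j lies in Im(H2ᵀ). Suppose a vector z = (∑_{ij} λ_{ij} x_i ⊗ y_j, 0) lies in the image of H_Zᵀ, where H_Z = (I_{n1} ⊗ H2 , H1ᵀ ⊗ I_{r2}). Then all λ_{ij} = 0. -/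
/-!
Write a preimage of `z` under `H_Zᵀ` as an `n1 × r2` matrix `W`; the two blocks of `H_Zᵀ` send it
to `W H2` and `H1 W`. Since `H1 W = 0`, the columns of `W` lie in `ker H1`, so `W = Xᵀ M` where the
rows of `X` are the `x i`. The first block reads `Xᵀ M H2 = Xᵀ Λ Y`, and `Xᵀ` can be cancelled
because its columns are independent: `M H2 = Λ Y`. Row `i` of this says that `∑ j, λ i j • y j`
is `H2ᵀ` applied to row `i` of `M`, hence `λ i = 0` by the assumption on the `y j`.
-/

open Matrix Kronecker

/-- Kronecker product of vectors. -/
def vecKron {m n : Type*} (x : m → ZMod 2) (y : n → ZMod 2) : m × n → ZMod 2 :=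
  fun p => x p.1 * y p.2

namespace Matrix

variable {R : Type*} [CommRing R] {k m n r r₁ r₂ : Type*}

theorem fromCols_kronecker_transpose_mulVec_vec [Fintype m] [DecidableEq m] [Fintype n]
    [Fintype r₂] [DecidableEq r₂] (H₁ : Matrix r₁ m R) (H₂ : Matrix r₂ n R) (W : Matrix m r₂ R) :
    (fromCols ((1 : Matrix m m R) ⊗ₖ H₂) (H₁ᵀ ⊗ₖ (1 : Matrix r₂ r₂ R)))ᵀ *ᵥ vec Wᵀ =
      Sum.elim (vec (W * H₂)ᵀ) (vec (H₁ * W)ᵀ) := by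
  rw [transpose_fromCols, fromRows_mulVec, ← kroneckerMap_transpose, ← kroneckerMap_transpose,
    transpose_one, transpose_transpose, kronecker_mulVec_vec, kronecker_mulVec_vec,
    transpose_one, transpose_one, Matrix.mul_one, Matrix.one_mul, transpose_mul, transpose_mul]

theorem exists_transpose_mul_eq_of_col_mem_span [Fintype k] {X : Matrix k m R}
    {W : Matrix m r R} (hW : ∀ c, W.col c ∈ Submodule.span R (Set.range X.row)) :
    ∃ M : Matrix k r R, Xᵀ * M = W := by
  simp_rw [← range_vecMulLinear, LinearMap.mem_range, vecMulLinear_apply] at hW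
  choose μ hμ using hW
  refine ⟨(of μ)ᵀ, ?_⟩
  rw [← transpose_mul, ← transpose_transpose W]
  exact congrArg transpose (ext_row hμ)

theorem transpose_mul_right_injective [Fintype k] {X : Matrix k m R}
    (hX : LinearIndependent R X.row) : Function.Injective fun M : Matrix k n R => Xᵀ * M := by
  rw [← col_transpose, ← mulVec_injective_iff] at hX
  exact fun A B h => ext_col fun j => hX congr(($h).col j)

theorem exists_mul_eq_of_mul_eq_transpose_mul [Fintype k] [Fintype m] [Fintype r]
    {H : Matrix r₁ m R} {X : Matrix k m R} (hX : LinearIndependent R X.row)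
    (hker : LinearMap.ker H.mulVecLin ≤ Submodule.span R (Set.range X.row))
    {W : Matrix m r R} (hW : H * W = 0) {A : Matrix r n R} {C : Matrix k n R}
    (h : W * A = Xᵀ * C) : ∃ M : Matrix k r R, M * A = C := by
  have hcol (c : r) : W.col c ∈ LinearMap.ker H.mulVecLin := congr(($hW).col c)
  obtain ⟨M, rfl⟩ := exists_transpose_mul_eq_of_col_mem_span fun c => hker (hcol c)
  exact ⟨M, transpose_mul_right_injective hX (by simpa only [Matrix.mul_assoc] using h)⟩

theorem row_mem_range_transpose_mulVecLin_of_mul_eq [Fintype r] {M : Matrix k r R}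
    {A : Matrix r n R} {C : Matrix k n R} (h : M * A = C) (i : k) :
    C i ∈ LinearMap.range Aᵀ.mulVecLin :=
  ⟨M i, by rw [mulVecLin_apply, mulVec_transpose, ← h]; rfl⟩

end Matrix

theorem sum_smul_vecKron_eq_vec {k l m n : Type*} [Fintype k] [Fintype l]
    (x : k → m → ZMod 2) (y : l → n → ZMod 2) (lam : k → l → ZMod 2) :
    ∑ i, ∑ j, lam i j • vecKron (x i) (y j) = vec ((of x)ᵀ * of lam * of y)ᵀ := by
  ext ⟨a, b⟩
  simp only [Finset.sum_apply, Pi.smul_apply, vecKron, smul_eq_mul, vec, transpose_apply,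
    mul_apply, of_apply, Finset.sum_mul]
  rw [Finset.sum_comm]
  exact Fintype.sum_congr _ _ fun j => Fintype.sum_congr _ _ fun i => by ring

theorem hgp_first_logicals_independent_general (r1 n1 r2 n2 k1 k2 : ℕ)
    (H1 : Matrix (Fin r1) (Fin n1) (ZMod 2))
    (H2 : Matrix (Fin r2) (Fin n2) (ZMod 2))
    (x : Fin k1 → Fin n1 → ZMod 2)
    (hxind : LinearIndependent (ZMod 2) x)
    (hxspan : Submodule.span (ZMod 2) (Set.range x) = LinearMap.ker H1.mulVecLin)
    (y : Fin k2 → Fin n2 → ZMod 2)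
    (hy : ∀ c : Fin k2 → ZMod 2,
      (∑ j, c j • y j) ∈ LinearMap.range H2ᵀ.mulVecLin → c = 0)
    (lam : Fin k1 → Fin k2 → ZMod 2)
    (hz : (Sum.elim (∑ i, ∑ j, lam i j • vecKron (x i) (y j))
            (0 : Fin r1 × Fin r2 → ZMod 2)) ∈
          LinearMap.range
            (Matrix.fromCols ((1 : Matrix (Fin n1) (Fin n1) (ZMod 2)) ⊗ₖ H2)
              (H1ᵀ ⊗ₖ (1 : Matrix (Fin r2) (Fin r2) (ZMod 2))))ᵀ.mulVecLin) :
    lam = 0 := by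
  obtain ⟨v, hv⟩ := hz
  set W : Matrix (Fin n1) (Fin r2) (ZMod 2) := of fun a c => v (a, c)
  change _ *ᵥ vec Wᵀ = _ at hv
  rw [fromCols_kronecker_transpose_mulVec_vec, sum_smul_vecKron_eq_vec, Sum.elim_eq_iff,
    vec_inj, vec_eq_zero_iff, transpose_inj, transpose_eq_zero] at hv
  obtain ⟨hWH2, hH1W⟩ := hv
  obtain ⟨M, hM⟩ := exists_mul_eq_of_mul_eq_transpose_mul (X := of x) hxind hxspan.ge hH1W
    (hWH2.trans (Matrix.mul_assoc _ _ _))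
  funext i
  refine hy (lam i) ?_
  convert row_mem_range_transpose_mulVecLin_of_mul_eq hM i
  exact (vecMul_eq_sum (lam i) (of y)).symm

/-- The first class of logical Z operators is linearly independent modulo Z-stabilizers. -/
theorem hgp_first_logicals_independent (r1 n1 r2 n2 k1 k2 : ℕ)
    (H1 : Matrix (Fin r1) (Fin n1) (ZMod 2))
    (H2 : Matrix (Fin r2) (Fin n2) (ZMod 2))
    (x : Fin k1 → Fin n1 → ZMod 2)
    (hxind : LinearIndependent (ZMod 2) x)
    (hxspan : Submodule.span (ZMod 2) (Set.range x) = LinearMap.ker H1.mulVecLin)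
    (y : Fin k2 → Fin n2 → ZMod 2)
    (hyunit : ∀ j, ∃ i : Fin n2, y j = Pi.single i (1 : ZMod 2))
    (hy : ∀ c : Fin k2 → ZMod 2,
      (∑ j, c j • y j) ∈ LinearMap.range H2ᵀ.mulVecLin → c = 0)
    (lam : Fin k1 → Fin k2 → ZMod 2)
    (hz : (Sum.elim (∑ i, ∑ j, lam i j • vecKron (x i) (y j))
            (0 : Fin r1 × Fin r2 → ZMod 2)) ∈
          LinearMap.range
            (Matrix.fromCols ((1 : Matrix (Fin n1) (Fin n1) (ZMod 2)) ⊗ₖ H2)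
              (H1ᵀ ⊗ₖ (1 : Matrix (Fin r2) (Fin r2) (ZMod 2))))ᵀ.mulVecLin) :
    lam = 0 :=
  hgp_first_logicals_independent_general r1 n1 r2 n2 k1 k2 H1 H2 x hxind hxspan y hy lam hz
end

section
/- Let H1, H2 be matrices over GF(2) with ker H1 having minimum (Hamming) weight ≥ d1 among nonzero elements. Let z = (z1, z2) be a logical Z operator of the hypergraph product code of the form z1 = ∑_j x_j' ⊗ y_j + ∑_k w_k ⊗ H2ᵀ w̃_k and z2 = ∑_ℓ a_ℓ ⊗ b_ℓ' + ∑_k H1 w_k ⊗ w̃_k, where each x_j' ∈ ker H1, the y_j are unit vectors no nonzero combination of which lies in Im(H2ᵀ), and at least one x_j' ≠ 0. Then there exist at least d1 distinct indices t ∈ {1,...,n1} such that the restriction of z1 to row t, namely (e_tᵀ ⊗ I_{n2}) z1, is nonzero. -/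
/-!
If `x' j₀ ≠ 0`, every coordinate `t` in its support is a nonzero row of `z1`: row `t` of `z1`
is `∑ⱼ x' j t • y j + H2ᵀ *ᵥ (∑ᵢ w i t • wt i)`, so if it vanished the combination
`∑ⱼ x' j t • y j` would lie in `Im H2ᵀ`, forcing every coefficient `x' j t` to be zero.
Hence the row support of `z1` contains the support of `x' j₀`, a nonzero element of `ker H1`,
which has at least `d1` elements.
-/

open Matrix Kronecker

section

variable {ι κ m n r : Type*} [Fintype ι] [Fintype κ] [Fintype r]

theorem row_eq_of_eq_sum_vecKron (A : Matrix n r (ZMod 2))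
    (x : ι → m → ZMod 2) (y : ι → n → ZMod 2) (w : κ → m → ZMod 2) (wt : κ → r → ZMod 2)
    (z : m × n → ZMod 2)
    (hz : z = ∑ j, vecKron (x j) (y j) + ∑ i, vecKron (w i) (A *ᵥ wt i)) (t : m) :
    (fun s => z (t, s)) = ∑ j, x j t • y j + A *ᵥ ∑ i, w i t • wt i := by
  subst hz
  ext s
  simp [Finset.sum_apply, vecKron, mulVec_sum, mulVec_smul]

theorem sum_smul_mem_range_of_sum_smul_add_mulVec_eq_zero {R : Type*} [CommRing R]
    (A : Matrix n r R) (c : ι → R) (y : ι → n → R) (u : r → R)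
    (h : ∑ j, c j • y j + A *ᵥ u = 0) :
    ∑ j, c j • y j ∈ LinearMap.range A.mulVecLin :=
  ⟨-u, by rw [mulVecLin_apply, mulVec_neg, eq_neg_of_add_eq_zero_left h]⟩

theorem hammingNorm_le_ncard_of_support_subset [Fintype m] {β : Type*} [Zero β] [DecidableEq β]
    (v : m → β) {S : Set m} (hS : {t | v t ≠ 0} ⊆ S) :
    hammingNorm v ≤ S.ncard := by
  calc hammingNorm v = {t | v t ≠ 0}.ncard := by
        rw [hammingNorm, ← Set.ncard_coe_finset]
        simp
    _ ≤ S.ncard := Set.ncard_le_ncard hS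

end

theorem hgp_logical_row_support_general (r1 n1 r2 n2 k K d1 : ℕ)
    (H1 : Matrix (Fin r1) (Fin n1) (ZMod 2))
    (H2 : Matrix (Fin r2) (Fin n2) (ZMod 2))
    (hd1 : ∀ v : Fin n1 → ZMod 2, H1.mulVec v = 0 → v ≠ 0 → d1 ≤ hammingNorm v)
    (x' : Fin k → Fin n1 → ZMod 2) (hx' : ∀ j, H1.mulVec (x' j) = 0)
    (y : Fin k → Fin n2 → ZMod 2)
    (hy : ∀ c : Fin k → ZMod 2,
      (∑ j, c j • y j) ∈ LinearMap.range H2ᵀ.mulVecLin → c = 0)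
    (w : Fin K → Fin n1 → ZMod 2) (wt : Fin K → Fin r2 → ZMod 2)
    (z1 : Fin n1 × Fin n2 → ZMod 2)
    (hz1 : z1 = ∑ j, vecKron (x' j) (y j) + ∑ i, vecKron (w i) (H2ᵀ.mulVec (wt i)))
    (hne : ∃ j, x' j ≠ 0) :
    d1 ≤ {t : Fin n1 | (fun s => z1 (t, s)) ≠ 0}.ncard := by
  obtain ⟨j₀, hj₀⟩ := hne
  have hsupport : {t | x' j₀ t ≠ 0} ⊆ {t : Fin n1 | (fun s => z1 (t, s)) ≠ 0} := by
    intro t hxt hrow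
    rw [row_eq_of_eq_sum_vecKron _ _ _ _ _ _ hz1] at hrow
    exact hxt (congrFun (hy _ (sum_smul_mem_range_of_sum_smul_add_mulVec_eq_zero _ _ _ _ hrow)) j₀)
  exact (hd1 _ (hx' j₀) hj₀).trans (hammingNorm_le_ncard_of_support_subset _ hsupport)

/-- Key lemma for distance robustness: if some `x' j ≠ 0`, the bit-type part `z1`
of a logical Z operator has nonzero support in at least `d1` distinct rows. -/
theorem hgp_logical_row_support (r1 n1 r2 n2 k K k' d1 : ℕ)
    (H1 : Matrix (Fin r1) (Fin n1) (ZMod 2))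
    (H2 : Matrix (Fin r2) (Fin n2) (ZMod 2))
    (hd1 : ∀ v : Fin n1 → ZMod 2, H1.mulVec v = 0 → v ≠ 0 → d1 ≤ hammingNorm v)
    (x' : Fin k → Fin n1 → ZMod 2) (hx' : ∀ j, H1.mulVec (x' j) = 0)
    (y : Fin k → Fin n2 → ZMod 2)
    (hyunit : ∀ j, ∃ i : Fin n2, y j = Pi.single i (1 : ZMod 2))
    (hy : ∀ c : Fin k → ZMod 2,
      (∑ j, c j • y j) ∈ LinearMap.range H2ᵀ.mulVecLin → c = 0)
    (w : Fin K → Fin n1 → ZMod 2) (wt : Fin K → Fin r2 → ZMod 2)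
    (a : Fin k' → Fin r1 → ZMod 2) (b' : Fin k' → Fin r2 → ZMod 2)
    (z1 : Fin n1 × Fin n2 → ZMod 2)
    (hz1 : z1 = ∑ j, vecKron (x' j) (y j) + ∑ i, vecKron (w i) (H2ᵀ.mulVec (wt i)))
    (z2 : Fin r1 × Fin r2 → ZMod 2)
    (hz2 : z2 = ∑ l, vecKron (a l) (b' l) + ∑ i, vecKron (H1.mulVec (w i)) (wt i))
    (hne : ∃ j, x' j ≠ 0) :
    d1 ≤ {t : Fin n1 | (fun s => z1 (t, s)) ≠ 0}.ncard :=
  hgp_logical_row_support_general r1 n1 r2 n2 k K d1 H1 H2 hd1 x' hx' y hy w wt z1 hz1 hne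
end

section
/- Let S ⊆ GF(2)^n be a subspace. Suppose x'_1,...,x'_k ∈ GF(2)^m with some x'_{j0} ≠ 0 of Hamming weight ≥ d, y_1,...,y_k ∈ GF(2)^n such that no nonzero linear combination of them lies in S, and v ∈ GF(2)^m ⊗ S (viewed inside GF(2)^{mn}). Then the vector u = ∑_j x'_j ⊗ y_j + v satisfies: for every t with e_t · x'_{j0} = 1, the row restriction (e_tᵀ ⊗ I_n) u ≠ 0; in particular u has nonzero support in at least d of the m coordinate blocks. -/
/-- Abstract row-support lemma: adding an element of `GF(2)^m ⊗ S` cannot remove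
the support of `∑ x'_j ⊗ y_j` from any row where `x'_{j0}` is `1`; in particular
the result is supported in at least `d` rows. -/
theorem row_support_lemma (m n k d : ℕ)
    (S : Submodule (ZMod 2) (Fin n → ZMod 2))
    (x' : Fin k → Fin m → ZMod 2) (y : Fin k → Fin n → ZMod 2)
    (hy : ∀ c : Fin k → ZMod 2, (∑ j, c j • y j) ∈ S → c = 0)
    (j0 : Fin k) (hj0 : x' j0 ≠ 0) (hwt : d ≤ hammingNorm (x' j0))
    (v : Fin m × Fin n → ZMod 2)
    (hv : v ∈ Submodule.span (ZMod 2)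
      {u : Fin m × Fin n → ZMod 2 | ∃ w : Fin m → ZMod 2, ∃ s ∈ S, u = vecKron w s})
    (u : Fin m × Fin n → ZMod 2)
    (hu : u = ∑ j, vecKron (x' j) (y j) + v) :
    (∀ t : Fin m, x' j0 t = 1 → (fun s => u (t, s)) ≠ 0) ∧
      d ≤ {t : Fin m | (fun s => u (t, s)) ≠ 0}.ncard := by
  -- each row of v lies in S
  have hrow : ∀ t : Fin m, (fun s => v (t, s)) ∈ S := by
    intro t
    have hmem : v ∈ Submodule.comap
        (LinearMap.funLeft (ZMod 2) (ZMod 2) (fun s : Fin n => (t, s))) S := by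
      refine Submodule.span_le.mpr ?_ hv
      rintro w ⟨a, s, hs, rfl⟩
      show (fun s' : Fin n => vecKron a s (t, s')) ∈ S
      have : (fun s' : Fin n => vecKron a s (t, s')) = a t • s := by
        funext s'; simp [vecKron, smul_eq_mul]
      rw [this]
      exact S.smul_mem _ hs
    exact hmem
  have key : ∀ t : Fin m, x' j0 t = 1 → (fun s => u (t, s)) ≠ 0 := by
    intro t ht hzero
    have hrowu : (fun s => u (t, s)) =
        (∑ j, x' j t • y j) + (fun s => v (t, s)) := by
      funext s
      simp only [hu, Pi.add_apply, Finset.sum_apply, vecKron, Pi.smul_apply,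
        smul_eq_mul]
    have hsum : (∑ j, x' j t • y j) = (fun s => v (t, s)) := by
      funext s
      have h := congrFun hzero s
      have h2 := congrFun hrowu s
      have h3 : (∑ j, x' j t • y j) s + v (t, s) = 0 := by
        have h5 := h2.symm.trans h
        simpa [Finset.sum_apply] using h5
      have h4 := add_eq_zero_iff_eq_neg.mp h3
      rwa [CharTwo.neg_eq] at h4
    have hc : (fun j => x' j t) = 0 := by
      apply hy
      rw [hsum]; exact hrow t
    have := congrFun hc j0
    rw [ht] at this
    exact one_ne_zero this
  refine ⟨key, ?_⟩
  refine le_trans hwt ?_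
  have hsubset : {t : Fin m | x' j0 t ≠ 0} ⊆ {t : Fin m | (fun s => u (t, s)) ≠ 0} := by
    intro t ht
    have h1 : x' j0 t = 1 := by
      have : ∀ a : ZMod 2, a ≠ 0 → a = 1 := by decide
      exact this _ ht
    exact key t h1
  have h1 : hammingNorm (x' j0) = {t : Fin m | x' j0 t ≠ 0}.ncard := by
    rw [hammingNorm]
    rw [← Set.ncard_coe_finset]
    congr 1
    ext t
    simp
  rw [h1]
  exact Set.ncard_le_ncard hsubset (Set.toFinite _)
end

section
/- Let H1, H2 be matrices over GF(2). Suppose every nonzero element of ker H1 has Hamming weight ≥ d1, every nonzero element of ker H2 has weight ≥ d2, every nonzero element of ker H1ᵀ has weight ≥ d1ᵀ, and every nonzero element of ker H2ᵀ has weight ≥ d2ᵀ. Then every vector z ∈ ker H_X \\ Im H_Zᵀ has Hamming weight ≥ min(d1, d2ᵀ) on its support, where H_X = (H1 ⊗ I_{n2}, I_{r1} ⊗ H2ᵀ) and H_Z = (I_{n1} ⊗ H2, H1ᵀ ⊗ I_{r2}). -/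
/-!
Write `z = (vec X, vec Y)`. Then `H_X z = 0` reads `X H₁ᵀ = H₂ᵀ Y`, and `z ∈ Im H_Zᵀ` means
`X = H₂ᵀ W`, `Y = W H₁ᵀ` for some `W`. Every vector in the column space of a matrix has weight at
most the number of nonzero entries of the matrix, so if `|z| < min d₁ d₂ᵀ`, then `ker H₂ᵀ` meets the
column space of `Y` trivially and `ker H₁` meets the column space of `Xᵀ` trivially. The first makes
`H₂ᵀ` injective on the columns of `Y`; with `ψ` a left inverse of `H₂ᵀ` there, `W = ψ X` satisfies
`W H₁ᵀ = ψ H₂ᵀ Y = Y`. The second gives `rank (X H₁ᵀ) = rank (H₁ Xᵀ) = rank X`, so every column of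
`X` is a column of `X H₁ᵀ = H₂ᵀ Y`, on which `H₂ᵀ ψ` is the identity; hence `H₂ᵀ W = X`.
-/

open Matrix Kronecker

theorem hammingNorm_comp_le_of_injective {ι κ β : Type*} [Fintype ι] [Fintype κ] [Zero β]
    [DecidableEq β] (x : ι → β) {f : κ → ι} (hf : Function.Injective f) :
    hammingNorm (x ∘ f) ≤ hammingNorm x :=
  Finset.card_le_card_of_injOn f (fun k hk => by simpa using hk) hf.injOn

namespace LinearMap

variable {K U V W X : Type*} [Field K]
  [AddCommGroup U] [Module K U] [AddCommGroup V] [Module K V]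
  [AddCommGroup W] [Module K W] [AddCommGroup X] [Module K X]

theorem ker_comp_subtype_eq_bot {f : V →ₗ[K] W} {p : Submodule K V} (h : Disjoint (ker f) p) :
    ker (f ∘ₗ p.subtype) = ⊥ := by
  rwa [ker_comp, ← Submodule.disjoint_iff_comap_eq_bot, disjoint_comm]

theorem finrank_range_comp_of_disjoint {f : V →ₗ[K] W} {g : U →ₗ[K] V}
    (h : Disjoint (ker f) (range g)) :
    Module.finrank K (range (f ∘ₗ g)) = Module.finrank K (range g) := by
  rw [range_comp, ← Submodule.range_subtype (range g), ← range_comp,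
    finrank_range_of_inj (ker_eq_bot.mp (ker_comp_subtype_eq_bot h)), Submodule.range_subtype]

theorem exists_diagonal_of_comp_eq_comp
    {f : V →ₗ[K] W} {α : U →ₗ[K] V} {β : X →ₗ[K] W} {g : U →ₗ[K] X}
    (hcomm : f ∘ₗ α = β ∘ₗ g) (hdisj : Disjoint (ker f) (range α))
    (hrange : range β ≤ range (β ∘ₗ g)) :
    ∃ ω : X →ₗ[K] V, ω ∘ₗ g = α ∧ f ∘ₗ ω = β := by
  obtain ⟨ψ, hψ⟩ := (f ∘ₗ (range α).subtype).exists_leftInverse_of_injective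
    (ker_comp_subtype_eq_bot hdisj)
  have hψα (u : U) : ((range α).subtype ∘ₗ ψ) (f (α u)) = α u := by
    simpa using congrArg Subtype.val (LinearMap.congr_fun hψ ⟨α u, mem_range_self α u⟩)
  refine ⟨(range α).subtype ∘ₗ ψ ∘ₗ β, ?_, ?_⟩
  · ext u
    simpa [← LinearMap.comp_apply β g, ← hcomm] using hψα u
  · ext x
    obtain ⟨u, hu⟩ := hrange (mem_range_self β x)
    have hfα : f (α u) = β x := by simpa [← hcomm] using hu
    have hψfα := hψα u
    simp only [comp_apply] at hψfα ⊢
    rw [← hfα, hψfα]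

end LinearMap

namespace Matrix

section Weight

variable {R m n r : Type*} [CommSemiring R] [DecidableEq R] [Fintype m] [Fintype n]

theorem hammingNorm_mulVec_le_hammingNorm_vec (M : Matrix m n R) (x : n → R) :
    hammingNorm (M *ᵥ x) ≤ hammingNorm (vec M) := by
  classical
  have hsupp : ({i | (M *ᵥ x) i ≠ 0} : Finset m) ⊆ Finset.image Prod.snd {p | vec M p ≠ 0} := by
    intro i hi
    obtain ⟨j, -, hj⟩ := Finset.exists_ne_zero_of_sum_ne_zero (Finset.mem_filter.mp hi).2
    exact Finset.mem_image.mpr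
      ⟨(j, i), Finset.mem_filter.mpr ⟨Finset.mem_univ _, left_ne_zero_of_mul hj⟩, rfl⟩
  exact (Finset.card_le_card hsupp).trans Finset.card_image_le

theorem disjoint_ker_range_of_hammingNorm_vec_lt {H : Matrix r m R} {M : Matrix m n R} {d : ℕ}
    (hd : ∀ v, H *ᵥ v = 0 → v ≠ 0 → d ≤ hammingNorm v) (hM : hammingNorm (vec M) < d) :
    Disjoint (LinearMap.ker H.mulVecLin) (LinearMap.range M.mulVecLin) := by
  rw [Submodule.disjoint_def]
  rintro _ hv ⟨x, rfl⟩
  by_contra hne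
  exact (hd _ hv hne).not_gt ((hammingNorm_mulVec_le_hammingNorm_vec M x).trans_lt hM)

end Weight

section Factorization

variable {K l m n o : Type*} [Field K] [Fintype m] [Fintype n] [Fintype o]

theorem rank_mul_eq_right_of_disjoint {M : Matrix l m K} {N : Matrix m n K}
    (h : Disjoint (LinearMap.ker M.mulVecLin) (LinearMap.range N.mulVecLin)) :
    (M * N).rank = N.rank := by
  rw [rank, rank, mulVecLin_mul, LinearMap.finrank_range_comp_of_disjoint h]

variable [Fintype l]

theorem range_mulVecLin_le_range_mul_of_disjoint {M : Matrix l m K} {N : Matrix m n K}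
    (h : Disjoint (LinearMap.ker Nᵀ.mulVecLin) (LinearMap.range Mᵀ.mulVecLin)) :
    LinearMap.range M.mulVecLin ≤ LinearMap.range (M * N).mulVecLin := by
  refine (Submodule.eq_of_le_of_finrank_eq ?_ ?_).ge
  · rw [mulVecLin_mul]
    exact LinearMap.range_comp_le_range _ _
  · rw [← rank, ← rank, ← rank_transpose, transpose_mul, rank_mul_eq_right_of_disjoint h,
      rank_transpose]

theorem exists_mul_eq_and_mul_eq {X : Matrix l m K} {Q : Matrix m n K}
    {P : Matrix l o K} {Y : Matrix o n K} (hcomm : X * Q = P * Y)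
    (hP : Disjoint (LinearMap.ker P.mulVecLin) (LinearMap.range Y.mulVecLin))
    (hQ : Disjoint (LinearMap.ker Qᵀ.mulVecLin) (LinearMap.range Xᵀ.mulVecLin)) :
    ∃ W : Matrix o m K, X = P * W ∧ Y = W * Q := by
  obtain ⟨ω, hωQ, hPω⟩ := LinearMap.exists_diagonal_of_comp_eq_comp (f := P.mulVecLin)
    (α := Y.mulVecLin) (β := X.mulVecLin) (g := Q.mulVecLin)
    (by rw [← mulVecLin_mul, ← mulVecLin_mul, hcomm]) hP
    (by rw [← mulVecLin_mul]; exact range_mulVecLin_le_range_mul_of_disjoint hQ)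
  classical
  refine ⟨LinearMap.toMatrix' ω, toLin'.injective ?_, toLin'.injective ?_⟩
  · rw [toLin'_mul, toLin'_toMatrix', toLin'_apply', toLin'_apply', hPω]
  · rw [toLin'_mul, toLin'_toMatrix', toLin'_apply', toLin'_apply', hωQ]

end Factorization

section HypergraphProduct

variable {R r₁ n₁ r₂ n₂ : Type*} [CommSemiring R] [Fintype n₁] [Fintype r₂]
  (A : Matrix r₁ n₁ R) (B : Matrix r₂ n₂ R)

theorem fromCols_kronecker_mulVec_sumElim_vec [Fintype r₁] [Fintype n₂] [DecidableEq r₁]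
    [DecidableEq n₂] (X : Matrix n₂ n₁ R) (Y : Matrix r₂ r₁ R) :
    fromCols (A ⊗ₖ (1 : Matrix n₂ n₂ R)) ((1 : Matrix r₁ r₁ R) ⊗ₖ Bᵀ) *ᵥ
      Sum.elim (vec X) (vec Y) = vec (X * Aᵀ + Bᵀ * Y) := by
  rw [fromCols_mulVec_sumElim, kronecker_mulVec_vec, kronecker_mulVec_vec]
  simp

theorem transpose_fromCols_kronecker_mulVec_vec [DecidableEq n₁] [DecidableEq r₂]
    (W : Matrix r₂ n₁ R) :
    (fromCols ((1 : Matrix n₁ n₁ R) ⊗ₖ B) (Aᵀ ⊗ₖ (1 : Matrix r₂ r₂ R)))ᵀ *ᵥ vec W =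
      Sum.elim (vec (Bᵀ * W)) (vec (W * Aᵀ)) := by
  rw [transpose_fromCols, fromRows_mulVec, ← kroneckerMap_transpose, ← kroneckerMap_transpose,
    kronecker_mulVec_vec, kronecker_mulVec_vec]
  simp

end HypergraphProduct

end Matrix

theorem hgp_distance_general (r1 n1 r2 n2 d1 d2T : ℕ)
    (H1 : Matrix (Fin r1) (Fin n1) (ZMod 2))
    (H2 : Matrix (Fin r2) (Fin n2) (ZMod 2))
    (hd1 : ∀ v : Fin n1 → ZMod 2, H1.mulVec v = 0 → v ≠ 0 → d1 ≤ hammingNorm v)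
    (hd2T : ∀ v : Fin r2 → ZMod 2, H2ᵀ.mulVec v = 0 → v ≠ 0 → d2T ≤ hammingNorm v)
    (z : (Fin n1 × Fin n2) ⊕ (Fin r1 × Fin r2) → ZMod 2)
    (hzker : (Matrix.fromCols (H1 ⊗ₖ (1 : Matrix (Fin n2) (Fin n2) (ZMod 2)))
        ((1 : Matrix (Fin r1) (Fin r1) (ZMod 2)) ⊗ₖ H2ᵀ)).mulVec z = 0)
    (hznotim : ∀ w : Fin n1 × Fin r2 → ZMod 2,
      (Matrix.fromCols ((1 : Matrix (Fin n1) (Fin n1) (ZMod 2)) ⊗ₖ H2)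
        (H1ᵀ ⊗ₖ (1 : Matrix (Fin r2) (Fin r2) (ZMod 2))))ᵀ.mulVec w ≠ z) :
    min d1 d2T ≤ hammingNorm z := by
  by_contra! hz
  set X : Matrix (Fin n2) (Fin n1) (ZMod 2) := of fun j i => z (.inl (i, j))
  set Y : Matrix (Fin r2) (Fin r1) (ZMod 2) := of fun s r => z (.inr (r, s))
  have hzXY : z = Sum.elim (vec X) (vec Y) := by ext (_ | _) <;> rfl
  have hX : hammingNorm (vec Xᵀ) < d1 := calc
    hammingNorm (vec Xᵀ) ≤ hammingNorm (vec X) :=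
      hammingNorm_comp_le_of_injective (vec X) Prod.swap_injective
    _ ≤ hammingNorm z := hammingNorm_comp_le_of_injective z Sum.inl_injective
    _ < min d1 d2T := hz
    _ ≤ d1 := min_le_left _ _
  have hY : hammingNorm (vec Y) < d2T :=
    ((hammingNorm_comp_le_of_injective z Sum.inr_injective).trans_lt hz).trans_le
      (min_le_right _ _)
  have hcomm : X * H1ᵀ = H2ᵀ * Y := by
    rw [hzXY, fromCols_kronecker_mulVec_sumElim_vec, vec_eq_zero_iff] at hzker
    rw [eq_neg_of_add_eq_zero_left hzker]
    ext
    exact ZMod.neg_eq_self_mod_two _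
  obtain ⟨W, hXW, hYW⟩ := exists_mul_eq_and_mul_eq hcomm
    (disjoint_ker_range_of_hammingNorm_vec_lt hd2T hY)
    (disjoint_ker_range_of_hammingNorm_vec_lt (by simpa using hd1) hX)
  exact hznotim (vec W) (by rw [transpose_fromCols_kronecker_mulVec_vec, hzXY, hXW, hYW])

/-- Distance of the hypergraph product code: every logical Z operator
(`z ∈ ker H_X \ Im H_Zᵀ`) has Hamming weight at least `min d1 d2ᵀ`. -/
theorem hgp_distance (r1 n1 r2 n2 d1 d2 d1T d2T : ℕ)
    (H1 : Matrix (Fin r1) (Fin n1) (ZMod 2))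
    (H2 : Matrix (Fin r2) (Fin n2) (ZMod 2))
    (hd1 : ∀ v : Fin n1 → ZMod 2, H1.mulVec v = 0 → v ≠ 0 → d1 ≤ hammingNorm v)
    (hd2 : ∀ v : Fin n2 → ZMod 2, H2.mulVec v = 0 → v ≠ 0 → d2 ≤ hammingNorm v)
    (hd1T : ∀ v : Fin r1 → ZMod 2, H1ᵀ.mulVec v = 0 → v ≠ 0 → d1T ≤ hammingNorm v)
    (hd2T : ∀ v : Fin r2 → ZMod 2, H2ᵀ.mulVec v = 0 → v ≠ 0 → d2T ≤ hammingNorm v)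
    (hker1 : ∃ v : Fin n1 → ZMod 2, v ≠ 0 ∧ H1.mulVec v = 0)
    (hker2T : ∃ v : Fin r2 → ZMod 2, v ≠ 0 ∧ H2ᵀ.mulVec v = 0)
    (z : (Fin n1 × Fin n2) ⊕ (Fin r1 × Fin r2) → ZMod 2)
    (hzker : (Matrix.fromCols (H1 ⊗ₖ (1 : Matrix (Fin n2) (Fin n2) (ZMod 2)))
        ((1 : Matrix (Fin r1) (Fin r1) (ZMod 2)) ⊗ₖ H2ᵀ)).mulVec z = 0)
    (hznotim : ∀ w : Fin n1 × Fin r2 → ZMod 2,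
      (Matrix.fromCols ((1 : Matrix (Fin n1) (Fin n1) (ZMod 2)) ⊗ₖ H2)
        (H1ᵀ ⊗ₖ (1 : Matrix (Fin r2) (Fin r2) (ZMod 2))))ᵀ.mulVec w ≠ z) :
    min d1 d2T ≤ hammingNorm z :=
  hgp_distance_general r1 n1 r2 n2 d1 d2T H1 H2 hd1 hd2T z hzker hznotim
end

section
/- Let H1, H2 be GF(2) matrices of sizes r1×n1, r2×n2, with k1 = dim ker H1, k2 = n2 − rank H2, k1ᵀ = r1 − rank H1, k2ᵀ = dim ker H2ᵀ. Then dim(ker H_X / Im H_Zᵀ) = k1·k2 + k1ᵀ·k2ᵀ, where H_X = (H1 ⊗ I_{n2}, I_{r1} ⊗ H2ᵀ) and H_Z = (I_{n1} ⊗ H2, H1ᵀ ⊗ I_{r2}). -/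
/-!
Up to swapping its two column blocks, each of `H_X` and `H_Z` has the shape `[A ⊗ 1 | 1 ⊗ B]`.
The column spaces of `A ⊗ 1` and `1 ⊗ B` meet exactly in that of `A ⊗ B` (a generalized inverse,
`A A⁻ A = A`, projects onto each factor), so `rank [A ⊗ 1 | 1 ⊗ B] = rank A · #p + #m · rank B -
rank A · rank B`. Since `H_X H_Zᵀ = 0`, the quotient has dimension `dim ker H_X - rank H_Z`, and
rank–nullity turns the count into `(n₁ - rank H₁)(n₂ - rank H₂) + (r₁ - rank H₁)(r₂ - rank H₂)`.
-/

open Matrix Kronecker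

section

variable {K : Type*} [Field K]

theorem TensorProduct.finrank_range_map {V W V' W' : Type*} [AddCommGroup V] [AddCommGroup W]
    [AddCommGroup V'] [AddCommGroup W'] [Module K V] [Module K W] [Module K V'] [Module K W']
    [FiniteDimensional K V] [FiniteDimensional K V'] (f : V →ₗ[K] W) (g : V' →ₗ[K] W') :
    Module.finrank K (LinearMap.range (TensorProduct.map f g)) =
      Module.finrank K (LinearMap.range f) * Module.finrank K (LinearMap.range g) := by
  have hfactor : TensorProduct.map f g =
      TensorProduct.map (LinearMap.range f).subtype (LinearMap.range g).subtype ∘ₗ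
        TensorProduct.map f.rangeRestrict g.rangeRestrict := by
    rw [← TensorProduct.map_comp]; rfl
  have hsurj : Function.Surjective (TensorProduct.map f.rangeRestrict g.rangeRestrict) :=
    TensorProduct.map_surjective f.surjective_rangeRestrict g.surjective_rangeRestrict
  have hinj : Function.Injective
      (TensorProduct.map (LinearMap.range f).subtype (LinearMap.range g).subtype) := by
    rw [← LinearMap.rTensor_comp_lTensor]
    exact (Module.Flat.rTensor_preserves_injective_linearMap _ (Submodule.injective_subtype _)).comp
      (Module.Flat.lTensor_preserves_injective_linearMap _ (Submodule.injective_subtype _))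
  rw [hfactor, LinearMap.range_comp_of_range_eq_top _ (LinearMap.range_eq_top.mpr hsurj),
    LinearMap.finrank_range_of_inj hinj, Module.finrank_tensorProduct]

namespace Matrix

variable {m n p q : Type*} [Fintype n] [Fintype p]

theorem range_mulVecLin_fromCols (A : Matrix m n K) (B : Matrix m p K) :
    LinearMap.range (fromCols A B).mulVecLin =
      LinearMap.range A.mulVecLin ⊔ LinearMap.range B.mulVecLin := by
  apply le_antisymm
  · rintro x ⟨v, rfl⟩
    rw [mulVecLin_apply, ← Sum.elim_comp_inl_inr v, fromCols_mulVec_sumElim]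
    exact Submodule.add_mem_sup ⟨_, rfl⟩ ⟨_, rfl⟩
  · refine sup_le ?_ ?_ <;> rintro x ⟨v, rfl⟩
    · exact ⟨Sum.elim v 0, by simp⟩
    · exact ⟨Sum.elim 0 v, by simp⟩

theorem rank_fromCols_comm (A : Matrix m n K) (B : Matrix m p K) :
    (fromCols A B).rank = (fromCols B A).rank := by
  rw [rank, rank, range_mulVecLin_fromCols, range_mulVecLin_fromCols, sup_comm]

theorem rank_fromCols_add_finrank_inf (A : Matrix m n K) (B : Matrix m p K) :
    (fromCols A B).rank +
        Module.finrank K ↥(LinearMap.range A.mulVecLin ⊓ LinearMap.range B.mulVecLin) =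
      A.rank + B.rank := by
  rw [rank, range_mulVecLin_fromCols]
  exact Submodule.finrank_sup_add_finrank_inf_eq _ _

theorem rank_add_finrank_ker_mulVecLin (A : Matrix m n K) :
    A.rank + Module.finrank K (LinearMap.ker A.mulVecLin) = Fintype.card n := by
  rw [rank, LinearMap.finrank_range_add_finrank_ker, Module.finrank_fintype_fun_eq_card]

variable [Fintype m] [Fintype q]

theorem rank_kronecker [DecidableEq m] [DecidableEq n] [DecidableEq p] [DecidableEq q]
    (A : Matrix m n K) (B : Matrix p q K) : (A ⊗ₖ B).rank = A.rank * B.rank := by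
  have h := rank_eq_finrank_range_toLin (A ⊗ₖ B)
    ((Pi.basisFun K m).tensorProduct (Pi.basisFun K p))
    ((Pi.basisFun K n).tensorProduct (Pi.basisFun K q))
  rw [toLin_kronecker] at h
  simp only [toLin_eq_toLin', toLin'_apply'] at h
  exact h.trans (TensorProduct.finrank_range_map _ _)

theorem exists_mul_mul_eq_self [DecidableEq m] [DecidableEq n] (A : Matrix m n K) :
    ∃ B : Matrix n m K, A * B * A = A := by
  obtain ⟨s, hs⟩ := A.mulVecLin.rangeRestrict.exists_rightInverse_of_surjective
    (LinearMap.range_eq_top.mpr A.mulVecLin.surjective_rangeRestrict)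
  obtain ⟨g, hg⟩ := LinearMap.exists_extend s
  refine ⟨LinearMap.toMatrix' g, toLin'.injective ?_⟩
  refine LinearMap.ext fun x => ?_
  have hgAx : g (A *ᵥ x) = s (A.mulVecLin.rangeRestrict x) :=
    LinearMap.congr_fun hg (A.mulVecLin.rangeRestrict x)
  have hsection := congrArg Subtype.val (LinearMap.congr_fun hs (A.mulVecLin.rangeRestrict x))
  simpa [toLin'_mul, hgAx] using hsection

theorem range_kronecker_one_inf_range_one_kronecker
    [DecidableEq m] [DecidableEq n] [DecidableEq p] [DecidableEq q]
    (A : Matrix m n K) (B : Matrix p q K) :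
    LinearMap.range (A ⊗ₖ (1 : Matrix p p K)).mulVecLin ⊓
        LinearMap.range ((1 : Matrix m m K) ⊗ₖ B).mulVecLin =
      LinearMap.range (A ⊗ₖ B).mulVecLin := by
  apply le_antisymm
  · obtain ⟨A', hA⟩ := A.exists_mul_mul_eq_self
    obtain ⟨B', hB⟩ := B.exists_mul_mul_eq_self
    rintro x ⟨⟨u, rfl⟩, v, hv⟩
    refine ⟨(A' ⊗ₖ B') *ᵥ (A ⊗ₖ (1 : Matrix p p K)) *ᵥ u, ?_⟩
    have hfixed : ((1 : Matrix m m K) ⊗ₖ (B * B')) *ᵥ (A ⊗ₖ (1 : Matrix p p K)) *ᵥ u =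
        (A ⊗ₖ (1 : Matrix p p K)) *ᵥ u := by
      simp only [mulVecLin_apply] at hv
      rw [← hv, mulVec_mulVec, ← mul_kronecker_mul, Matrix.one_mul, hB]
    simp only [mulVecLin_apply, mulVec_mulVec, ← mul_kronecker_mul, Matrix.mul_one] at hfixed ⊢
    rw [← hfixed, ← Matrix.mul_assoc, hA, Matrix.one_mul]
  · have hleft : A ⊗ₖ B = (A ⊗ₖ (1 : Matrix p p K)) * ((1 : Matrix n n K) ⊗ₖ B) := by
      rw [← mul_kronecker_mul, Matrix.mul_one, Matrix.one_mul]
    have hright : A ⊗ₖ B = ((1 : Matrix m m K) ⊗ₖ B) * (A ⊗ₖ (1 : Matrix q q K)) := by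
      rw [← mul_kronecker_mul, Matrix.mul_one, Matrix.one_mul]
    refine le_inf ?_ ?_
    · rw [hleft, mulVecLin_mul]; exact LinearMap.range_comp_le_range _ _
    · rw [hright, mulVecLin_mul]; exact LinearMap.range_comp_le_range _ _

theorem rank_fromCols_kronecker_add
    [DecidableEq m] [DecidableEq n] [DecidableEq p] [DecidableEq q]
    (A : Matrix m n K) (B : Matrix p q K) :
    (fromCols (A ⊗ₖ (1 : Matrix p p K)) ((1 : Matrix m m K) ⊗ₖ B)).rank +
        A.rank * B.rank =
      A.rank * Fintype.card p + Fintype.card m * B.rank := by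
  have h := rank_fromCols_add_finrank_inf (A ⊗ₖ (1 : Matrix p p K))
    ((1 : Matrix m m K) ⊗ₖ B)
  rwa [range_kronecker_one_inf_range_one_kronecker, ← rank, rank_kronecker, rank_kronecker,
    rank_kronecker, rank_one, rank_one] at h

end Matrix

end

theorem Submodule.finrank_quotient_comap_subtype_add_finrank {K V : Type*} [DivisionRing K]
    [AddCommGroup V] [Module K V] [FiniteDimensional K V] {U W : Submodule K V} (h : U ≤ W) :
    Module.finrank K (W ⧸ U.comap W.subtype) + Module.finrank K U = Module.finrank K W := by
  rw [← (Submodule.comapSubtypeEquivOfLe h).finrank_eq, Submodule.finrank_quotient_add_finrank]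

theorem hgp_mul_transpose_eq_zero {K : Type*} [CommRing K] [CharP K 2]
    {r1 n1 r2 n2 : Type*} [Fintype r1] [Fintype n1] [Fintype r2] [Fintype n2]
    [DecidableEq r1] [DecidableEq n1] [DecidableEq r2] [DecidableEq n2]
    (H1 : Matrix r1 n1 K) (H2 : Matrix r2 n2 K) :
    Matrix.fromCols (H1 ⊗ₖ (1 : Matrix n2 n2 K)) ((1 : Matrix r1 r1 K) ⊗ₖ H2ᵀ) *
      (Matrix.fromCols ((1 : Matrix n1 n1 K) ⊗ₖ H2) (H1ᵀ ⊗ₖ (1 : Matrix r2 r2 K)))ᵀ = 0 := by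
  rw [Matrix.transpose_fromCols, Matrix.fromCols_mul_fromRows,
    ← Matrix.kroneckerMap_transpose, ← Matrix.kroneckerMap_transpose,
    Matrix.transpose_one, Matrix.transpose_one, Matrix.transpose_transpose,
    ← Matrix.mul_kronecker_mul, ← Matrix.mul_kronecker_mul,
    Matrix.mul_one, Matrix.one_mul, Matrix.mul_one, Matrix.one_mul]
  ext i j
  exact CharTwo.add_self_eq_zero _

/-- The number of logical qubits of the hypergraph product code:
`dim(ker H_X / Im H_Zᵀ) = k1·k2 + k1ᵀ·k2ᵀ`. -/
theorem hgp_logical_dimension (r1 n1 r2 n2 : ℕ)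
    (H1 : Matrix (Fin r1) (Fin n1) (ZMod 2))
    (H2 : Matrix (Fin r2) (Fin n2) (ZMod 2)) :
    Module.finrank (ZMod 2)
      (↥(LinearMap.ker (Matrix.fromCols (H1 ⊗ₖ (1 : Matrix (Fin n2) (Fin n2) (ZMod 2)))
            ((1 : Matrix (Fin r1) (Fin r1) (ZMod 2)) ⊗ₖ H2ᵀ)).mulVecLin) ⧸
        (LinearMap.range (Matrix.fromCols ((1 : Matrix (Fin n1) (Fin n1) (ZMod 2)) ⊗ₖ H2)
            (H1ᵀ ⊗ₖ (1 : Matrix (Fin r2) (Fin r2) (ZMod 2))))ᵀ.mulVecLin).comap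
          (LinearMap.ker (Matrix.fromCols (H1 ⊗ₖ (1 : Matrix (Fin n2) (Fin n2) (ZMod 2)))
            ((1 : Matrix (Fin r1) (Fin r1) (ZMod 2)) ⊗ₖ H2ᵀ)).mulVecLin).subtype) =
    Module.finrank (ZMod 2) (LinearMap.ker H1.mulVecLin) * (n2 - H2.rank) +
      (r1 - H1.rank) * Module.finrank (ZMod 2) (LinearMap.ker H2ᵀ.mulVecLin) := by
  set HX := Matrix.fromCols (H1 ⊗ₖ (1 : Matrix (Fin n2) (Fin n2) (ZMod 2)))
    ((1 : Matrix (Fin r1) (Fin r1) (ZMod 2)) ⊗ₖ H2ᵀ)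
  set HZ := Matrix.fromCols ((1 : Matrix (Fin n1) (Fin n1) (ZMod 2)) ⊗ₖ H2)
    (H1ᵀ ⊗ₖ (1 : Matrix (Fin r2) (Fin r2) (ZMod 2)))
  have hle : LinearMap.range HZᵀ.mulVecLin ≤ LinearMap.ker HX.mulVecLin := by
    rw [LinearMap.range_le_ker_iff, ← Matrix.mulVecLin_mul, hgp_mul_transpose_eq_zero,
      Matrix.mulVecLin_zero]
  have hquot := Submodule.finrank_quotient_comap_subtype_add_finrank hle
  have hX := HX.rank_add_finrank_ker_mulVecLin
  have hXrank := Matrix.rank_fromCols_kronecker_add H1 H2ᵀ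
  have hZrank := Matrix.rank_fromCols_kronecker_add H1ᵀ H2
  have h1 := H1.rank_add_finrank_ker_mulVecLin
  have h2 := H2ᵀ.rank_add_finrank_ker_mulVecLin
  rw [← Matrix.rank_fromCols_comm] at hZrank
  rw [← Matrix.rank, Matrix.rank_transpose] at hquot
  simp only [Matrix.rank_transpose, Fintype.card_fin, Fintype.card_sum, Fintype.card_prod]
    at hX hXrank hZrank h1 h2
  have hr1 : H1.rank ≤ r1 := by simpa using H1.rank_le_card_height
  have hn2 : H2.rank ≤ n2 := by simpa using H2.rank_le_card_width
  zify [hr1, hn2] at hquot hX hXrank hZrank h1 h2 ⊢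
  linear_combination hquot + hX - hXrank - hZrank + ((H2.rank : ℤ) - n2) * h1 +
    ((H1.rank : ℤ) - r1) * h2
end

section
/- Let H1, H2 be GF(2) matrices defining a hypergraph product code with X-check matrix H_X = (H1 ⊗ I_{n2}, I_{r1} ⊗ H2ᵀ) and Z-check matrix H_Z = (I_{n1} ⊗ H2, H1ᵀ ⊗ I_{r2}). Suppose nonzero elements of ker H1 have weight ≥ d1 and nonzero elements of ker H2ᵀ have weight ≥ d2ᵀ, with both kernels nonzero, and let d = min(d1, d2ᵀ). For each row s of H_Z, let P(s) denote the set of all vectors p ∈ GF(2)^{n1 n2 + r1 r2} whose support is contained in the support of s (partial stabilizers from hook errors). Then for any logical operator z ∈ ker H_X \\ Im H_Zᵀ, if z can be written as z = ∑_{i=1}^m p_i + e with each p_i ∈ P(s_i) for rows s_i of H_Z and e ∈ GF(2)^{n1 n2 + r1 r2}, then m + wt(e) ≥ d, where wt denotes Hamming weight. -/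
open Matrix Kronecker


lemma mulVec_ext' {F : Type*} [Semiring F] {α β : Type*} [Fintype β] [DecidableEq β]
    {M N : Matrix α β F} (h : ∀ v, M *ᵥ v = N *ᵥ v) : M = N := by
  ext i j
  have := congrFun (h (Pi.single j 1)) i
  simpa [Matrix.mulVec_single] using this

lemma exists_factor {F : Type*} [Field F] {α β γ : Type*} [Fintype α] [Fintype β] [Fintype γ]
    [DecidableEq β] [DecidableEq γ]
    (M : Matrix α β F) (H : Matrix γ β F)
    (h : ∀ g : β → F, H *ᵥ g = 0 → M *ᵥ g = 0) :
    ∃ W : Matrix α γ F, M = W * H := by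
  classical
  set f := H.mulVecLin with hf
  set g := M.mulVecLin with hg
  have hker : LinearMap.ker f ≤ LinearMap.ker g := by
    intro x hx
    rw [LinearMap.mem_ker] at hx ⊢
    exact h x hx
  let φ : LinearMap.range f →ₗ[F] (α → F) :=
    (Submodule.liftQ (LinearMap.ker f) g hker) ∘ₗ
      (f.quotKerEquivRange.symm : LinearMap.range f →ₗ[F] _)
  obtain ⟨L, hL⟩ := LinearMap.exists_extend φ
  refine ⟨LinearMap.toMatrix' L, mulVec_ext' fun v => ?_⟩
  have key : L (f v) = g v := by
    have h1 : L (f v) = φ ⟨f v, LinearMap.mem_range_self f v⟩ := by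
      rw [← hL]; rfl
    rw [h1]
    show (Submodule.liftQ (LinearMap.ker f) g hker)
      (f.quotKerEquivRange.symm ⟨f v, LinearMap.mem_range_self f v⟩) = g v
    rw [LinearMap.quotKerEquivRange_symm_apply_image, Submodule.mkQ_apply,
      Submodule.liftQ_apply]
  have hW : (LinearMap.toMatrix' L) *ᵥ (H *ᵥ v) = L (H *ᵥ v) := by
    rw [← Matrix.toLin'_apply, Matrix.toLin'_toMatrix']
  calc M *ᵥ v = g v := rfl
    _ = L (f v) := key.symm
    _ = (LinearMap.toMatrix' L) *ᵥ (H *ᵥ v) := by rw [hW]; rfl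
    _ = (LinearMap.toMatrix' L * H) *ᵥ v := by rw [Matrix.mulVec_mulVec]

lemma exists_proj {F : Type*} [Field F] {β γ : Type*} [Fintype β] [Fintype γ] [DecidableEq β]
    (H : Matrix γ β F) :
    ∃ P : Matrix β β F, (∀ v, H *ᵥ (P *ᵥ v) = 0) ∧ (∀ v, H *ᵥ v = 0 → P *ᵥ v = v) := by
  classical
  obtain ⟨q, hq⟩ := (LinearMap.ker H.mulVecLin).exists_isCompl
  let π : (β → F) →ₗ[F] (β → F) :=
    (LinearMap.ker H.mulVecLin).subtype ∘ₗ Submodule.projectionOnto _ q hq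
  have happ : ∀ v, (LinearMap.toMatrix' π) *ᵥ v = π v := by
    intro v; rw [← Matrix.toLin'_apply, Matrix.toLin'_toMatrix']
  refine ⟨LinearMap.toMatrix' π, fun v => ?_, fun v hv => ?_⟩
  · rw [happ]
    have : π v ∈ LinearMap.ker H.mulVecLin := (Submodule.projectionOnto _ q hq v).2
    simpa [Matrix.mulVecLin_apply] using this
  · rw [happ]
    have hv' : v ∈ LinearMap.ker H.mulVecLin := by
      rw [LinearMap.mem_ker]; exact hv
    show ((LinearMap.ker H.mulVecLin).subtype)
      (Submodule.projectionOnto _ q hq v) = v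
    rw [show v = ((⟨v, hv'⟩ : LinearMap.ker H.mulVecLin) : β → F) from rfl,
      Submodule.linearProjOfIsCompl_apply_left hq]
    rfl

lemma wt_bound {ι J : Type*} [Fintype ι] [Fintype J] [DecidableEq ι] [DecidableEq J]
    {m : ℕ} (v : ι → ZMod 2) (τ : Fin m → ι) (π : J → ι) (E : J → ZMod 2)
    (h : ∀ x, (∀ i, τ i ≠ x) → v x ≠ 0 → ∃ j, π j = x ∧ E j ≠ 0) :
    hammingNorm v ≤ m + hammingNorm E := by
  classical
  have hv : hammingNorm v = (Finset.univ.filter fun x => v x ≠ 0).card := rfl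
  have hE : hammingNorm E = (Finset.univ.filter fun j => E j ≠ 0).card := rfl
  rw [hv, hE]
  have hsub : (Finset.univ.filter fun x => v x ≠ 0) ⊆
      Finset.image τ Finset.univ ∪
        Finset.image π (Finset.univ.filter fun j => E j ≠ 0) := by
    intro x hx
    simp only [Finset.mem_filter, Finset.mem_univ, true_and] at hx
    rcases Classical.em (∃ i, τ i = x) with ⟨i, hi⟩ | hne
    · exact Finset.mem_union_left _ (Finset.mem_image.2 ⟨i, Finset.mem_univ _, hi⟩)
    · push_neg at hne
      obtain ⟨j, hj1, hj2⟩ := h x hne hx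
      exact Finset.mem_union_right _
        (Finset.mem_image.2 ⟨j, by simp [hj2], hj1⟩)
  calc (Finset.univ.filter fun x => v x ≠ 0).card
      ≤ _ := Finset.card_le_card hsub
    _ ≤ (Finset.image τ Finset.univ).card +
        (Finset.image π (Finset.univ.filter fun j => E j ≠ 0)).card :=
          Finset.card_union_le _ _
    _ ≤ m + (Finset.univ.filter fun j => E j ≠ 0).card := by
        gcongr
        · exact Finset.card_image_le.trans (by simp)
        · exact Finset.card_image_le

/-- Distance robustness of hypergraph product codes (Theorem 2): if a logical
operator `z` is produced by `m` hook errors (partial stabilizers from `m`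
distinct rows of `H_Z`) together with data-qubit errors `e`, then
`m + wt(e) ≥ d = min(d1, d2ᵀ)`. -/
theorem hgp_effective_distance (r1 n1 r2 n2 d1 d2T m : ℕ)
    (H1 : Matrix (Fin r1) (Fin n1) (ZMod 2))
    (H2 : Matrix (Fin r2) (Fin n2) (ZMod 2))
    (hker1 : ∃ v : Fin n1 → ZMod 2, v ≠ 0 ∧ H1.mulVec v = 0)
    (hker2T : ∃ v : Fin r2 → ZMod 2, v ≠ 0 ∧ H2ᵀ.mulVec v = 0)
    (hd1 : ∀ v : Fin n1 → ZMod 2, H1.mulVec v = 0 → v ≠ 0 → d1 ≤ hammingNorm v)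
    (hd2T : ∀ v : Fin r2 → ZMod 2, H2ᵀ.mulVec v = 0 → v ≠ 0 → d2T ≤ hammingNorm v)
    (z : (Fin n1 × Fin n2) ⊕ (Fin r1 × Fin r2) → ZMod 2)
    (hzker : (Matrix.fromCols (H1 ⊗ₖ (1 : Matrix (Fin n2) (Fin n2) (ZMod 2)))
        ((1 : Matrix (Fin r1) (Fin r1) (ZMod 2)) ⊗ₖ H2ᵀ)).mulVec z = 0)
    (hznotim : ∀ w : Fin n1 × Fin r2 → ZMod 2,
      (Matrix.fromCols ((1 : Matrix (Fin n1) (Fin n1) (ZMod 2)) ⊗ₖ H2)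
        (H1ᵀ ⊗ₖ (1 : Matrix (Fin r2) (Fin r2) (ZMod 2))))ᵀ.mulVec w ≠ z)
    (σ : Fin m → Fin n1 × Fin r2) (hσ : Function.Injective σ)
    (p : Fin m → ((Fin n1 × Fin n2) ⊕ (Fin r1 × Fin r2)) → ZMod 2)
    (hp : ∀ (i : Fin m) (c : (Fin n1 × Fin n2) ⊕ (Fin r1 × Fin r2)),
      (Matrix.fromCols ((1 : Matrix (Fin n1) (Fin n1) (ZMod 2)) ⊗ₖ H2)
        (H1ᵀ ⊗ₖ (1 : Matrix (Fin r2) (Fin r2) (ZMod 2)))) (σ i) c = 0 → p i c = 0)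
    (e : (Fin n1 × Fin n2) ⊕ (Fin r1 × Fin r2) → ZMod 2)
    (hz : z = ∑ i, p i + e) :
    min d1 d2T ≤ m + hammingNorm e := by
  classical
  set A : Matrix (Fin n1) (Fin n2) (ZMod 2) :=
    Matrix.of (fun x y => z (Sum.inl (x, y))) with hAdef
  set B : Matrix (Fin r1) (Fin r2) (ZMod 2) :=
    Matrix.of (fun a b => z (Sum.inr (a, b))) with hBdef
  -- the kernel condition in block form
  have hAB : H1 * A + B * H2 = 0 := by
    ext a b
    have h := congrFun hzker (a, b)
    simp only [Matrix.mulVec, dotProduct, Fintype.sum_sum_type,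
      Matrix.fromCols_apply_inl, Matrix.fromCols_apply_inr,
      Matrix.kroneckerMap_apply, Matrix.one_apply, Matrix.transpose_apply,
      Fintype.sum_prod_type, mul_ite, ite_mul, mul_one, one_mul, mul_zero, zero_mul,
      Finset.sum_ite_eq, Finset.sum_ite_eq', Finset.mem_univ, if_true,
      Pi.zero_apply] at h
    simp only [Matrix.add_apply, Matrix.mul_apply, Matrix.zero_apply, Matrix.of_apply]
    rw [← h]
    congr 1
    rw [Finset.sum_comm]
    simp only [Finset.sum_ite_eq, Finset.mem_univ, if_true]
    exact Finset.sum_congr rfl fun d _ => by rw [mul_comm]; rfl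
  -- hook-free entries agree with e
  have hAe : ∀ x y, (∀ i, (σ i).1 ≠ x) → A x y = e (Sum.inl (x, y)) := by
    intro x y hx
    have hpz : ∀ i, p i (Sum.inl (x, y)) = 0 := by
      intro i
      apply hp
      rw [Matrix.fromCols_apply_inl, Matrix.kroneckerMap_apply,
        Matrix.one_apply_ne (hx i), zero_mul]
    have : z (Sum.inl (x, y)) = e (Sum.inl (x, y)) := by
      rw [hz]
      simp [Finset.sum_apply, hpz]
    simpa [hAdef] using this
  have hBe : ∀ a b, (∀ i, (σ i).2 ≠ b) → B a b = e (Sum.inr (a, b)) := by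
    intro a b hb
    have hpz : ∀ i, p i (Sum.inr (a, b)) = 0 := by
      intro i
      apply hp
      rw [Matrix.fromCols_apply_inr, Matrix.kroneckerMap_apply,
        Matrix.one_apply_ne (hb i), mul_zero]
    have : z (Sum.inr (a, b)) = e (Sum.inr (a, b)) := by
      rw [hz]
      simp [Finset.sum_apply, hpz]
    simpa [hBdef] using this
  by_cases hc1 : ∃ g : Fin n2 → ZMod 2, H2 *ᵥ g = 0 ∧ A *ᵥ g ≠ 0
  · -- Case 1
    obtain ⟨g, hg, hAg⟩ := hc1
    set v : Fin n1 → ZMod 2 := A *ᵥ g with hvdef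
    have hvker : H1 *ᵥ v = 0 := by
      have h1 : H1 *ᵥ (A *ᵥ g) = (H1 * A) *ᵥ g := (Matrix.mulVec_mulVec _ _ _)
      have h2 : H1 * A = -(B * H2) := by
        rw [← neg_eq_of_add_eq_zero_left hAB]
      rw [hvdef, h1, h2, Matrix.neg_mulVec, ← Matrix.mulVec_mulVec, hg,
        Matrix.mulVec_zero, neg_zero]
    have hd : d1 ≤ hammingNorm v := hd1 v hvker hAg
    -- v x ≠ 0 off hook rows needs an e-support witness
    obtain ⟨x0, hx0⟩ : ∃ x0, v x0 ≠ 0 := by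
      by_contra hno
      push_neg at hno
      exact hAg (funext hno)
    have hwt : hammingNorm v ≤ m + hammingNorm e := by
      apply wt_bound v (fun i => (σ i).1)
        (Sum.elim (fun q : Fin n1 × Fin n2 => q.1) (fun _ => x0)) e
      intro x hx hvx
      by_contra hno
      push_neg at hno
      apply hvx
      show (A *ᵥ g) x = 0
      rw [Matrix.mulVec]
      apply Finset.sum_eq_zero
      intro y _
      have h1 : A x y = e (Sum.inl (x, y)) := hAe x y hx
      have h2 : e (Sum.inl (x, y)) = 0 := hno (Sum.inl (x, y)) rfl
      show A x y * g y = 0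
      rw [h1, h2, zero_mul]
    exact le_trans (min_le_left _ _) (le_trans hd hwt)
  by_cases hc2 : ∃ f : Fin r1 → ZMod 2, H1ᵀ *ᵥ f = 0 ∧ Bᵀ *ᵥ f ≠ 0
  · -- Case 2
    obtain ⟨f, hf, hBf⟩ := hc2
    set w : Fin r2 → ZMod 2 := Bᵀ *ᵥ f with hwdef
    have hwker : H2ᵀ *ᵥ w = 0 := by
      have h1 : H2ᵀ *ᵥ (Bᵀ *ᵥ f) = (H2ᵀ * Bᵀ) *ᵥ f := (Matrix.mulVec_mulVec _ _ _)
      have h2 : H2ᵀ * Bᵀ = (B * H2)ᵀ := (Matrix.transpose_mul _ _).symm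
      have h3 : B * H2 = -(H1 * A) := by
        rw [← neg_eq_of_add_eq_zero_right hAB]
      rw [hwdef, h1, h2, h3, Matrix.transpose_neg, Matrix.neg_mulVec,
        Matrix.transpose_mul, ← Matrix.mulVec_mulVec, hf, Matrix.mulVec_zero, neg_zero]
    have hd : d2T ≤ hammingNorm w := hd2T w hwker hBf
    obtain ⟨b0, hb0⟩ : ∃ b0, w b0 ≠ 0 := by
      by_contra hno
      push_neg at hno
      exact hBf (funext hno)
    have hwt : hammingNorm w ≤ m + hammingNorm e := by
      apply wt_bound w (fun i => (σ i).2)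
        (Sum.elim (fun _ => b0) (fun q : Fin r1 × Fin r2 => q.2)) e
      intro b hb hwb
      by_contra hno
      push_neg at hno
      apply hwb
      show (Bᵀ *ᵥ f) b = 0
      rw [Matrix.mulVec]
      apply Finset.sum_eq_zero
      intro a _
      have h1 : B a b = e (Sum.inr (a, b)) := hBe a b hb
      have h2 : e (Sum.inr (a, b)) = 0 := hno (Sum.inr (a, b)) rfl
      show Bᵀ b a * f a = 0
      rw [Matrix.transpose_apply, h1, h2, zero_mul]
    exact le_trans (min_le_right _ _) (le_trans hd hwt)
  -- Case 3 : z is a stabilizer, contradiction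
  exfalso
  push_neg at hc1 hc2
  obtain ⟨W1, hW1⟩ := exists_factor A H2 (fun g hg => hc1 g hg)
  obtain ⟨V, hV⟩ := exists_factor Bᵀ H1ᵀ (fun f hf => hc2 f hf)
  have hB2 : B = H1 * Vᵀ := by
    have := congrArg Matrix.transpose hV
    rwa [Matrix.transpose_transpose, Matrix.transpose_mul,
      Matrix.transpose_transpose] at this
  obtain ⟨P, hP1, hP2⟩ := exists_proj H1
  set D : Matrix (Fin n1) (Fin r2) (ZMod 2) := W1 + Vᵀ with hDdef
  have hD : H1 * D * H2 = 0 := by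
    rw [hDdef, Matrix.mul_add, Matrix.add_mul, Matrix.mul_assoc, ← hW1, ← hB2]
    exact hAB
  have hH1P : H1 * P = 0 := by
    apply mulVec_ext'
    intro v
    rw [← Matrix.mulVec_mulVec, hP1, Matrix.zero_mulVec]
  have hPD : P * (D * H2) = D * H2 := by
    apply mulVec_ext'
    intro u
    rw [← Matrix.mulVec_mulVec]
    apply hP2
    rw [Matrix.mulVec_mulVec, ← Matrix.mul_assoc, hD, Matrix.zero_mulVec]
  set W : Matrix (Fin n1) (Fin r2) (ZMod 2) := Vᵀ + P * D with hWdef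
  have hAW : W * H2 = A := by
    have char2 : ∀ X : Matrix (Fin n1) (Fin n2) (ZMod 2), X + X = 0 := by
      intro X; ext i j
      simp only [Matrix.add_apply, Matrix.zero_apply]
      exact CharTwo.add_self_eq_zero _
    rw [hWdef, Matrix.add_mul, Matrix.mul_assoc, hPD, hDdef, Matrix.add_mul]
    rw [hW1]
    have : Vᵀ * H2 + (W1 * H2 + Vᵀ * H2) = W1 * H2 + (Vᵀ * H2 + Vᵀ * H2) := by abel
    rw [this, char2, add_zero]
  have hBW : H1 * W = B := by
    rw [hWdef, Matrix.mul_add, ← Matrix.mul_assoc, hH1P, Matrix.zero_mul, add_zero, hB2]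
  apply hznotim (fun q => W q.1 q.2)
  funext c
  cases c with
  | inl xy =>
    obtain ⟨x, y⟩ := xy
    have : z (Sum.inl (x, y)) = (W * H2) x y := by rw [hAW]; rfl
    rw [this]
    simp only [Matrix.mulVec, dotProduct, Matrix.transpose_apply,
      Fintype.sum_prod_type, Matrix.fromCols_apply_inl,
      Matrix.kroneckerMap_apply, Matrix.one_apply, ite_mul, mul_ite,
      one_mul, zero_mul, mul_zero, Finset.sum_ite_eq, Finset.sum_ite_eq',
      Finset.mem_univ, if_true, Matrix.mul_apply]
    rw [Finset.sum_comm]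
    simp [Finset.sum_ite_eq, Finset.sum_ite_eq', mul_comm]
  | inr ab =>
    obtain ⟨a, b⟩ := ab
    have : z (Sum.inr (a, b)) = (H1 * W) a b := by rw [hBW]; rfl
    rw [this]
    simp only [Matrix.mulVec, dotProduct, Matrix.transpose_apply,
      Fintype.sum_prod_type, Matrix.fromCols_apply_inr,
      Matrix.kroneckerMap_apply, Matrix.one_apply, ite_mul, mul_ite,
      one_mul, zero_mul, mul_zero, Finset.sum_ite_eq, Finset.sum_ite_eq',
      Finset.mem_univ, if_true, Matrix.mul_apply]
    simp [Finset.sum_ite_eq, Finset.sum_ite_eq', mul_comm]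
end
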